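/- Let p be an odd prime. Then the second moment of the family y² = x³ + 4(4T+2)x, namely Σ_{t=0}^{p−1} ( Σ_{x=0}^{p−1} ((x³ + (16t+8)x)/p) )², equals 2p² − 2p if p ≡ 1 (mod 4) and equals 0 if p ≡ 3 (mod 4). -/

import Mathlib

/-!
For the quadratic character `χ` of a finite field of odd order `q`, `χ (x³ + c x) = χ x χ (c + x²)`.
Expanding the square and summing over `c` first leaves the correlations
`∑ c, χ (c + x²) χ (c + y²)`, which are `q - 1` if `x² = y²` and `-1` otherwise. As `∑ χ = 0`,
only the pairs `y = ± x` survive, and the second moment is `q (q - 1) (1 + χ (-1))`.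
For `q = p`, the map `t ↦ 16 t + 8` permutes `𝔽_p` and `χ (-1) = ±1` according as `p ≡ ±1 mod 4`.
-/

open Finset

section QuadraticCharSums

variable {F : Type*} [Field F] [Fintype F] [DecidableEq F]

local notation "χ" => quadraticChar F

theorem quadraticChar_sum_sq :
    ∑ c : F, χ c ^ 2 = Fintype.card F - 1 := by
  simp_rw [← MulChar.pow_apply' χ two_ne_zero, (quadraticChar_isQuadratic F).sq_eq_one, MulChar.sum_one_eq_card_units,
    Fintype.card_units]
  push_cast [Fintype.card_pos]
  ring

-- Substituting `c = -a x` turns the sum into `χ(-1)` times the Jacobi sum `J(χ, χ) = J(χ, χ⁻¹)`.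
theorem quadraticChar_sum_mul_add (hF : ringChar F ≠ 2) {a : F} (ha : a ≠ 0) :
    ∑ c : F, χ c * χ (c + a) = -1 := by
  have hterm : ∀ x : F, χ (-a * x) * χ (-a * x + a) = χ (-1) * (χ x * χ (1 - x)) := fun x => by
    rw [show -a * x + a = a * (1 - x) by ring, show -a * x = -1 * a * x by ring, map_mul, map_mul,
      map_mul]
    linear_combination (χ (-1) * χ x * χ (1 - x)) * quadraticChar_sq_one ha
  calc ∑ c : F, χ c * χ (c + a) = ∑ x : F, χ (-a * x) * χ (-a * x + a) :=
        Equiv.sum_comp (Equiv.mulLeft₀ (-a) (neg_ne_zero.2 ha)) (fun c => χ c * χ (c + a)) |>.symm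
    _ = χ (-1) * jacobiSum χ χ⁻¹ := by
        rw [(quadraticChar_isQuadratic F).inv, jacobiSum, mul_sum]
        exact sum_congr rfl fun x _ => hterm x
    _ = -1 := by
        rw [jacobiSum_nontrivial_inv (quadraticChar_ne_one hF)]
        linear_combination -quadraticChar_sq_one (neg_ne_zero.2 (one_ne_zero (α := F)))

theorem quadraticChar_sum_add_mul_add (hF : ringChar F ≠ 2) (u v : F) :
    ∑ c : F, χ (c + u) * χ (c + v) = Fintype.card F * (if u = v then 1 else 0) - 1 := by
  rw [← (Equiv.subRight u).sum_comp]
  simp only [Equiv.subRight_apply, sub_add_cancel, sub_add_eq_add_sub, add_sub_assoc]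
  split_ifs with h
  · simp only [h, sub_self, add_zero, ← sq, quadraticChar_sum_sq, mul_one]
  · rw [quadraticChar_sum_mul_add hF (sub_ne_zero.2 (Ne.symm h))]
    ring

theorem quadraticChar_sum_filter_sq_eq_sq (hF : ringChar F ≠ 2) (x : F) :
    ∑ y with y ^ 2 = x ^ 2, χ y = χ x * (1 + χ (-1)) := by
  by_cases hx : x = 0
  · simp [hx, filter_eq']
  have hfilter : ({y | y ^ 2 = x ^ 2} : Finset F) = {x, -x} := by
    ext y
    simp [sq_eq_sq_iff_eq_or_eq_neg]
  rw [hfilter, sum_pair (Ne.symm (mt (Ring.eq_self_iff_eq_zero_of_char_ne_two hF).1 hx)),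
    neg_eq_neg_one_mul, map_mul]
  ring

theorem quadraticChar_second_moment_cubic (hF : ringChar F ≠ 2) :
    ∑ c : F, (∑ x : F, χ (x ^ 3 + c * x)) ^ 2
      = Fintype.card F * (Fintype.card F - 1) * (1 + χ (-1)) := by
  have hsplit : ∀ c x : F, χ (x ^ 3 + c * x) = χ x * χ (c + x ^ 2) := fun c x => by
    rw [← map_mul]; ring_nf
  calc ∑ c : F, (∑ x : F, χ (x ^ 3 + c * x)) ^ 2
      = ∑ x : F, ∑ y : F, χ x * χ y * ∑ c : F, χ (c + x ^ 2) * χ (c + y ^ 2) := by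
        simp_rw [hsplit, sq, sum_mul_sum, mul_sum]
        rw [sum_comm]
        refine sum_congr rfl fun x _ => ?_
        rw [sum_comm]
        exact sum_congr rfl fun y _ => sum_congr rfl fun c _ => by ring
    _ = Fintype.card F * ∑ x : F, χ x * ∑ y with y ^ 2 = x ^ 2, χ y
          - (∑ x : F, χ x) * ∑ y : F, χ y := by
        simp_rw [quadraticChar_sum_add_mul_add hF, sum_filter, mul_sum, sum_mul, ← sum_sub_distrib]
        refine sum_congr rfl fun x _ => sum_congr rfl fun y _ => ?_
        simp only [eq_comm (a := x ^ 2)]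
        split_ifs <;> ring
    _ = Fintype.card F * (Fintype.card F - 1) * (1 + χ (-1)) := by
        simp_rw [quadraticChar_sum_filter_sq_eq_sq hF, quadraticChar_sum_zero hF, ← mul_assoc,
          ← sq, ← sum_mul, quadraticChar_sum_sq]
        ring

end QuadraticCharSums

theorem ZMod.sum_range_natCast {M : Type*} [AddCommMonoid M] (n : ℕ) [NeZero n]
    (f : ZMod n → M) : ∑ i ∈ range n, f i = ∑ x : ZMod n, f x :=
  sum_nbij' (↑) ZMod.val (fun _ _ => mem_univ _) (fun x _ => mem_range.2 x.val_lt)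
    (fun _ hi => ZMod.val_cast_of_lt (mem_range.1 hi)) (fun x _ => ZMod.natCast_zmod_val x)
    (fun _ _ => rfl)

/-- For an odd prime `p`, the second moment of the family
`y² = x³ + 4(4T+2)x` equals `2p² − 2p` if `p ≡ 1 (mod 4)` and `0` if `p ≡ 3 (mod 4)`. -/
theorem second_moment_cm_family_mod_four (p : ℕ) [Fact p.Prime] (hodd : p ≠ 2) :
    (p % 4 = 1 →
      ∑ t ∈ Finset.range p,
          (∑ x ∈ Finset.range p,
              legendreSym p ((x : ℤ) ^ 3 + (16 * (t : ℤ) + 8) * (x : ℤ))) ^ 2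
        = 2 * (p : ℤ) ^ 2 - 2 * p) ∧
    (p % 4 = 3 →
      ∑ t ∈ Finset.range p,
          (∑ x ∈ Finset.range p,
              legendreSym p ((x : ℤ) ^ 3 + (16 * (t : ℤ) + 8) * (x : ℤ))) ^ 2
        = 0) := by
  have hF : ringChar (ZMod p) ≠ 2 := by rwa [ZMod.ringChar_zmod_n]
  have h16 : (16 : ZMod p) ≠ 0 := by
    simpa only [show (16 : ZMod p) = 2 ^ 4 by norm_num] using pow_ne_zero 4 (Ring.two_ne_zero hF)
  have moment : ∑ t ∈ range p, (∑ x ∈ range p,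
      legendreSym p ((x : ℤ) ^ 3 + (16 * (t : ℤ) + 8) * (x : ℤ))) ^ 2
      = p * (p - 1) * (1 + ZMod.χ₄ p) := calc
    _ = ∑ t : ZMod p, (∑ x : ZMod p, quadraticChar (ZMod p) (x ^ 3 + (16 * t + 8) * x)) ^ 2 := by
      push_cast [legendreSym]
      rw [← ZMod.sum_range_natCast p]
      refine sum_congr rfl fun t _ => ?_
      rw [← ZMod.sum_range_natCast p]
    _ = ∑ c : ZMod p, (∑ x : ZMod p, quadraticChar (ZMod p) (x ^ 3 + c * x)) ^ 2 :=
      Fintype.sum_equiv ((Equiv.mulLeft₀ 16 h16).trans (Equiv.addRight 8)) _ _ fun _ => rfl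
    _ = p * (p - 1) * (1 + ZMod.χ₄ p) := by
      rw [quadraticChar_second_moment_cubic hF, quadraticChar_neg_one hF, ZMod.card]
  constructor <;> intro hp <;> rw [moment]
  · rw [ZMod.χ₄_nat_one_mod_four hp]; ring
  · rw [ZMod.χ₄_nat_three_mod_four hp]; ring
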